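/- arXiv:2308.14877 — 8 statements merged into one kernel-verified Lean document; each statement's English description precedes it below -/
import Mathlib

section
/- Let (X,d) be a complete metric space, T[g] : X → [0,∞], and {z_n} a sequence in X with no converging subsequence such that ∑_n T[g](z_n)·d(z_n, z_{n+1}) < +∞. Then liminf_{n→∞} T[g](z_n) = 0. -/
/-!
If `liminf T (z n)` were positive, then eventually `T (z n) ≥ ε > 0`, so the tail of
`∑ d (z n, z (n+1))` is dominated by `ε⁻¹ ∑ T (z n) d (z n, z (n+1)) < ∞`. A sequence whose
consecutive distances are summable is Cauchy, hence converges in a complete space,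
contradicting the absence of convergent subsequences.
-/

open Filter
open scoped ENNReal NNReal

theorem cauchySeq_of_le_weight_of_tsum_ne_top {α : Type*} [PseudoEMetricSpace α]
    {z : ℕ → α} {w : ℕ → ℝ≥0∞} {ε : ℝ≥0} (hε : ε ≠ 0) (hw : ∀ n, (ε : ℝ≥0∞) ≤ w n)
    (hsum : ∑' n, w n * edist (z n) (z (n + 1)) ≠ ⊤) : CauchySeq z := by
  refine cauchySeq_of_edist_le_of_tsum_ne_top
    (fun n => (ε : ℝ≥0∞)⁻¹ * (w n * edist (z n) (z (n + 1)))) (fun n => ?_) ?_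
  · refine (ENNReal.mul_le_iff_le_inv (by simpa using hε) ENNReal.coe_ne_top).mp ?_
    gcongr
    exact hw n
  · rw [ENNReal.tsum_mul_left]
    exact ENNReal.mul_ne_top (ENNReal.inv_ne_top.mpr (by simpa using hε)) hsum

theorem cauchySeq_of_eventually_le_weight_of_tsum_ne_top {α : Type*} [PseudoEMetricSpace α]
    {z : ℕ → α} {w : ℕ → ℝ≥0∞} {ε : ℝ≥0} (hε : ε ≠ 0) (hw : ∀ᶠ n in atTop, (ε : ℝ≥0∞) ≤ w n)
    (hsum : ∑' n, w n * edist (z n) (z (n + 1)) ≠ ⊤) : CauchySeq z := by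
  obtain ⟨N, hN⟩ := eventually_atTop.mp hw
  rw [← cauchySeq_shift N]
  refine cauchySeq_of_le_weight_of_tsum_ne_top (w := fun n => w (n + N)) hε
    (fun n => hN _ (Nat.le_add_left N n)) (ne_top_of_le_ne_top hsum ?_)
  simp only [Nat.add_right_comm _ 1 N]
  exact ENNReal.tsum_comp_le_tsum_of_injective (add_left_injective N)
    (fun n => w n * edist (z n) (z (n + 1)))

/-- In a complete metric space, a sequence with no convergent
subsequence satisfying the summability condition has `liminf T (z n) = 0`. -/
theorem stmt1 {X : Type*} [MetricSpace X] [CompleteSpace X] (T : X → ℝ≥0∞) (z : ℕ → X)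
    (hnoconv : ¬ ∃ (φ : ℕ → ℕ) (x : X), StrictMono φ ∧ Tendsto (z ∘ φ) atTop (nhds x))
    (hsum : ∑' n, T (z n) * ENNReal.ofReal (dist (z n) (z (n + 1))) ≠ ⊤) :
    liminf (fun n => T (z n)) atTop = 0 := by
  by_contra hne
  obtain ⟨ε, hε, hεlt⟩ := ENNReal.lt_iff_exists_nnreal_btwn.mp (pos_iff_ne_zero.mpr hne)
  have hw : ∀ᶠ n in atTop, (ε : ℝ≥0∞) ≤ T (z n) :=
    (eventually_lt_of_lt_liminf hεlt).mono fun _ => le_of_lt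
  simp only [← edist_dist] at hsum
  have hz : CauchySeq z :=
    cauchySeq_of_eventually_le_weight_of_tsum_ne_top (ENNReal.coe_pos.mp hε).ne' hw hsum
  obtain ⟨x, hx⟩ := cauchySeq_tendsto_of_complete hz
  exact hnoconv ⟨id, x, strictMono_id, hx⟩
end

section
/- Let (X,d) be a metric space and f : X → ℝ ∪ {+∞} a proper function bounded from below. Define the global slope 𝒢[f](x) = sup_{y ∈ X, y ≠ x} (f(x)−f(y))⁺ / d(x,y) for x in the domain of f (and +∞ otherwise). If {z_n} is a sequence in the domain of f with ∑_n 𝒢[f](z_n)·d(z_n, z_{n+1}) < +∞ and 𝒢[f](z_n) → 0 with 𝒢[f](z_n) > 0 for all n, and the sequence {𝒢[f](z_n)} is strictly decreasing, then for any u ∈ X, liminf_{n→∞} 𝒢[f](z_n)·d(z_n, u) = 0. -/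
open Filter
open scoped ENNReal

/-- The global slope `𝒢[f](x) = sup_{y ≠ x} (f(x) - f(y))⁺ / d(x,y)` for `x ∈ dom f`,
and `+∞` otherwise.  (The term at `y = x` vanishes, so we may take the sup over all `y`.) -/
noncomputable def globalSlope {X : Type*} [MetricSpace X] (f : X → EReal) (x : X) : ℝ≥0∞ :=
  if f x = ⊤ then ⊤
  else ⨆ y, ENNReal.ofReal ((max (f x - f y) 0).toReal / dist x y)

/-- For a proper, bounded-below `f` and a sequence `z` in `dom f` with
summable `𝒢[f](z n) · d(z n, z (n+1))`, strictly decreasing positive slopes tending to `0`,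
one has `liminf 𝒢[f](z n) · d(z n, u) = 0` for every `u`. -/
theorem stmt2 {X : Type*} [MetricSpace X] (f : X → EReal)
    (hbot : ∀ x, f x ≠ ⊥) (hproper : ∃ x, f x ≠ ⊤)
    (hbdd : ∃ m : ℝ, ∀ x, (m : EReal) ≤ f x)
    (z : ℕ → X) (hdom : ∀ n, f (z n) ≠ ⊤)
    (hsum : ∑' n, globalSlope f (z n) * ENNReal.ofReal (dist (z n) (z (n + 1))) ≠ ⊤)
    (hpos : ∀ n, 0 < globalSlope f (z n))
    (hdec : StrictAnti fun n => globalSlope f (z n))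
    (hto0 : Tendsto (fun n => globalSlope f (z n)) atTop (nhds 0))
    (u : X) :
    liminf (fun n => globalSlope f (z n) * ENNReal.ofReal (dist (z n) u)) atTop = 0 := by
  set a : ℕ → ℝ≥0∞ := fun n => globalSlope f (z n) with ha
  set b : ℕ → ℝ≥0∞ := fun n => ENNReal.ofReal (dist (z n) (z (n + 1))) with hb
  have hmono : Antitone a := hdec.antitone
  suffices h : Tendsto (fun n => a n * ENNReal.ofReal (dist (z n) u)) atTop (nhds 0) from
    h.liminf_eq
  rw [ENNReal.tendsto_atTop_zero]
  intro ε hε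
  -- choose N with small tail
  have htail := ENNReal.tendsto_sum_nat_add (fun n => a n * b n) hsum
  obtain ⟨N, hN⟩ := (ENNReal.tendsto_atTop_zero.mp htail) (ε / 2)
    (ENNReal.half_pos hε.ne' )
  have hNtail : ∑' i, a (i + N) * b (i + N) ≤ ε / 2 := hN N le_rfl
  -- choose M for the constant part
  set C : ℝ≥0∞ := ENNReal.ofReal (dist (z N) u) with hC
  have hconst : Tendsto (fun n => a n * C) atTop (nhds 0) := by
    have := ENNReal.Tendsto.mul_const hto0 (Or.inr ENNReal.ofReal_ne_top : (0:ℝ≥0∞) ≠ 0 ∨ C ≠ ⊤)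
    simpa using this
  obtain ⟨M, hM⟩ := (ENNReal.tendsto_atTop_zero.mp hconst) (ε / 2)
    (ENNReal.half_pos hε.ne')
  refine ⟨max N M, fun n hn => ?_⟩
  have hnN : N ≤ n := le_trans (le_max_left _ _) hn
  have hnM : M ≤ n := le_trans (le_max_right _ _) hn
  -- triangle inequality
  have htri : dist (z n) u ≤ dist (z N) u + ∑ k ∈ Finset.Ico N n, dist (z k) (z (k + 1)) := by
    calc dist (z n) u ≤ dist (z n) (z N) + dist (z N) u := dist_triangle _ _ _
    _ ≤ (∑ k ∈ Finset.Ico N n, dist (z k) (z (k + 1))) + dist (z N) u := by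
        gcongr
        rw [dist_comm]
        exact dist_le_Ico_sum_dist z hnN
    _ = _ := by ring
  have h1 : ENNReal.ofReal (dist (z n) u) ≤ C + ∑ k ∈ Finset.Ico N n, b k := by
    calc ENNReal.ofReal (dist (z n) u)
        ≤ ENNReal.ofReal (dist (z N) u + ∑ k ∈ Finset.Ico N n, dist (z k) (z (k + 1))) :=
          ENNReal.ofReal_le_ofReal htri
      _ = C + ENNReal.ofReal (∑ k ∈ Finset.Ico N n, dist (z k) (z (k + 1))) :=
          ENNReal.ofReal_add dist_nonneg (Finset.sum_nonneg fun _ _ => dist_nonneg)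
      _ = C + ∑ k ∈ Finset.Ico N n, b k := by
          rw [ENNReal.ofReal_sum_of_nonneg fun _ _ => dist_nonneg]
  calc a n * ENNReal.ofReal (dist (z n) u)
      ≤ a n * (C + ∑ k ∈ Finset.Ico N n, b k) := by gcongr
    _ = a n * C + ∑ k ∈ Finset.Ico N n, a n * b k := by
        rw [mul_add, Finset.mul_sum]
    _ ≤ ε / 2 + ∑ k ∈ Finset.Ico N n, a k * b k := by
        gcongr with k hk
        · exact hM n hnM
        · exact hmono (Finset.mem_Ico.mp hk).2.le
    _ ≤ ε / 2 + ∑' i, a (i + N) * b (i + N) := by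
        gcongr
        have : ∑ k ∈ Finset.Ico N n, a k * b k = ∑ i ∈ Finset.range (n - N), a (i + N) * b (i + N) := by
          rw [Finset.sum_Ico_eq_sum_range]
          exact Finset.sum_congr rfl fun i _ => by rw [Nat.add_comm]
        rw [this]
        exact ENNReal.sum_le_tsum _
    _ ≤ ε / 2 + ε / 2 := by gcongr
    _ = ε := ENNReal.add_halves ε
end

section
/- Let (X,d) be a complete metric space and f : X → ℝ ∪ {+∞} proper, lower semicontinuous, continuous on its domain, bounded below, with finite global slope on its domain. If {z_n} ⊂ X has no convergent subsequence, 𝒢[f](z_n) > 0 for all n, and ∑_n 𝒢[f](z_n)·d(z_n, z_{n+1}) < +∞, then liminf_{n→∞} f(z_n) = inf f. -/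
/-!
Suppose `liminf f (z n) > inf f`: pick `y` and a real `c` with `f y < c < f (z n)` for `n ≥ N`.
Then `𝒢[f](z n) ≥ (c - f y) / d(z n, y)`, and `d(z n, y) ≤ d(z N, y) + S n`, where `S n` is the
length of the path `z N, …, z n`. A sequence without convergent subsequences in a complete space is
not Cauchy, so `S n → ∞`; by the Abel–Dini argument `∑ d(z n, z (n+1)) / (d(z N, y) + S n)`
then diverges, contradicting the finiteness of `∑ 𝒢[f](z n) d(z n, z (n+1))`.
-/

open Filter
open scoped ENNReal

open Finset Real

theorem Real.log_add_sub_log_le {s d : ℝ} (hs : 0 < s) (hd : 0 ≤ d) :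
    log (s + d) - log s ≤ d / s := by
  rw [← log_div (by positivity) hs.ne']
  calc log ((s + d) / s) ≤ (s + d) / s - 1 := log_le_sub_one_of_pos (by positivity)
    _ = d / s := by field_simp; ring

/-- Abel–Dini: the partial sums telescope to at least `log (C + ∑ d) - log C`. -/
theorem not_summable_div_add_sum_range {d : ℕ → ℝ} {C : ℝ} (hd : ∀ n, 0 ≤ d n) (hC : 0 < C)
    (hs : ¬ Summable d) : ¬ Summable fun n => d n / (C + ∑ i ∈ range n, d i) := by
  set S : ℕ → ℝ := fun n => C + ∑ i ∈ range n, d i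
  have hS : ∀ n, 0 < S n := fun n => add_pos_of_pos_of_nonneg hC (sum_nonneg fun i _ => hd i)
  have hlog : ∀ K, log (S K) - log C ≤ ∑ n ∈ range K, d n / S n := by
    intro K
    rw [show log C = log (S 0) by simp [S], ← sum_range_sub (fun n => log (S n))]
    refine sum_le_sum fun n _ => ?_
    rw [show S (n + 1) = S n + d n by simp only [S, sum_range_succ]; ring]
    exact log_add_sub_log_le (hS n) (hd n)
  rw [not_summable_iff_tendsto_nat_atTop_of_nonneg fun n => div_nonneg (hd n) (hS n).le]
  refine tendsto_atTop_mono hlog (tendsto_atTop_add_const_right _ _ (tendsto_log_atTop.comp ?_))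
  exact tendsto_atTop_add_const_left _ _ ((not_summable_iff_tendsto_nat_atTop_of_nonneg hd).1 hs)

theorem not_summable_dist_succ_div_dist {X : Type*} [MetricSpace X] {z : ℕ → X} {y : X}
    (hy : ∀ n, z n ≠ y) (hs : ¬ Summable fun n => dist (z n) (z (n + 1))) :
    ¬ Summable fun n => dist (z n) (z (n + 1)) / dist (z n) y := by
  refine fun h => not_summable_div_add_sum_range (fun n => dist_nonneg) (dist_pos.2 (hy 0)) hs
    (h.of_nonneg_of_le (fun n => by positivity) fun n => ?_)
  gcongr
  · exact dist_pos.2 (hy n)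
  calc dist (z n) y ≤ dist (z 0) (z n) + dist (z 0) y := dist_triangle_left _ _ _
    _ ≤ _ := by rw [add_comm]; gcongr; exact dist_le_range_sum_dist z n

theorem ofReal_div_dist_le_globalSlope {X : Type*} [MetricSpace X] {f : X → EReal} {x y : X}
    {δ : ℝ} (hδ : 0 ≤ δ) (hy : f y ≠ ⊥) (h : f y + δ ≤ f x) :
    ENNReal.ofReal (δ / dist x y) ≤ globalSlope f x := by
  unfold globalSlope
  split_ifs with hx
  · exact le_top
  refine le_iSup_of_le y (ENNReal.ofReal_le_ofReal ?_)
  gcongr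
  lift f x to ℝ using ⟨hx, ne_bot_of_le_ne_bot (EReal.add_ne_bot_iff.2 ⟨hy, by simp⟩) h⟩ with a
  lift f y to ℝ using ⟨fun h' => hx (top_le_iff.1 (by rwa [h', EReal.top_add_coe] at h)), hy⟩ with b
  have hab : b + δ ≤ a := by exact_mod_cast h
  rw [← EReal.coe_sub, max_eq_left (EReal.coe_nonneg.2 (by linarith)), EReal.toReal_coe]
  linarith

theorem summable_dist_succ_div_dist_of_tsum_globalSlope_ne_top {X : Type*} [MetricSpace X]
    {f : X → EReal} {z : ℕ → X} {y : X} {δ : ℝ} (hδ : 0 < δ) (hy : f y ≠ ⊥)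
    (hz : ∀ n, f y + δ ≤ f (z n))
    (hsum : ∑' n, globalSlope f (z n) * ENNReal.ofReal (dist (z n) (z (n + 1))) ≠ ⊤) :
    Summable fun n => dist (z n) (z (n + 1)) / dist (z n) y := by
  have key : ∀ n, ENNReal.ofReal (δ * (dist (z n) (z (n + 1)) / dist (z n) y)) ≤
      globalSlope f (z n) * ENNReal.ofReal (dist (z n) (z (n + 1))) := fun n => by
    rw [show δ * (dist (z n) (z (n + 1)) / dist (z n) y) =
      δ / dist (z n) y * dist (z n) (z (n + 1)) by ring, ENNReal.ofReal_mul (by positivity)]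
    gcongr
    exact ofReal_div_dist_le_globalSlope hδ.le hy (hz n)
  have := ENNReal.summable_toReal (ne_top_of_le_ne_top hsum (ENNReal.tsum_le_tsum key))
  exact (summable_mul_left_iff hδ.ne').1 (this.congr fun n => ENNReal.toReal_ofReal (by positivity))

theorem stmt3_general {X : Type*} [MetricSpace X] [CompleteSpace X] (f : X → EReal)
    (hbot : ∀ x, f x ≠ ⊥)
    (z : ℕ → X)
    (hnoconv : ¬ ∃ (φ : ℕ → ℕ) (x : X), StrictMono φ ∧ Tendsto (z ∘ φ) atTop (nhds x))
    (hsum : ∑' n, globalSlope f (z n) * ENNReal.ofReal (dist (z n) (z (n + 1))) ≠ ⊤) :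
    liminf (fun n => f (z n)) atTop = ⨅ x, f x := by
  refine le_antisymm ?_ (le_liminf_of_le (by isBoundedDefault) (.of_forall fun n => iInf_le _ _))
  by_contra! hlt
  obtain ⟨y, hy⟩ := iInf_lt_iff.1 hlt
  obtain ⟨c, hyc, hc⟩ := EReal.exists_between_coe_real hy
  obtain ⟨N, hN⟩ := eventually_atTop.1 (eventually_lt_of_lt_liminf hc)
  have hz : ∀ n, c < f (z (N + n)) := fun n => hN _ (Nat.le_add_right N n)
  have hzy : ∀ n, z (N + n) ≠ y := fun n h => (hyc.trans (hz n)).ne (congrArg f h).symm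
  have hsteps : ¬ Summable fun n => dist (z (N + n)) (z (N + n + 1)) := by
    intro h
    have h' := (summable_nat_add_iff (f := fun n => dist (z n) (z (n + 1))) N).1
      (h.congr fun n => by rw [add_comm])
    obtain ⟨x, hx⟩ := cauchySeq_tendsto_of_complete (cauchySeq_of_summable_dist h')
    exact hnoconv ⟨id, x, strictMono_id, hx⟩
  obtain ⟨v, hv⟩ : ∃ v : ℝ, f y = v := ⟨_, (EReal.coe_toReal hyc.ne_top (hbot y)).symm⟩
  have hδ : ∀ n, f y + ((c - v : ℝ) : EReal) ≤ f (z (N + n)) := fun n => by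
    rw [hv, ← EReal.coe_add, add_sub_cancel]
    exact (hz n).le
  exact not_summable_dist_succ_div_dist hzy hsteps
    (summable_dist_succ_div_dist_of_tsum_globalSlope_ne_top
      (sub_pos.2 (EReal.coe_lt_coe_iff.1 (hv ▸ hyc))) (hbot y) hδ
      (ne_top_of_le_ne_top hsum (ENNReal.tsum_comp_le_tsum_of_injective (add_right_injective N) _)))

/-- Let `X` be complete, `f` proper, lsc, continuous on its domain,
bounded below, with finite global slope on its domain.  If `z` has no convergent
subsequence, `𝒢[f](z n) > 0` and `∑ 𝒢[f](z n) d(z n, z (n+1)) < ∞`, then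
`liminf f (z n) = inf f`. -/
theorem stmt3 {X : Type*} [MetricSpace X] [CompleteSpace X] (f : X → EReal)
    (hbot : ∀ x, f x ≠ ⊥) (hproper : ∃ x, f x ≠ ⊤)
    (hlsc : LowerSemicontinuous f)
    (hcont : ContinuousOn f {x | f x ≠ ⊤})
    (hbdd : ∃ m : ℝ, ∀ x, (m : EReal) ≤ f x)
    (hfin : ∀ x, f x ≠ ⊤ → globalSlope f x ≠ ⊤)
    (z : ℕ → X)
    (hnoconv : ¬ ∃ (φ : ℕ → ℕ) (x : X), StrictMono φ ∧ Tendsto (z ∘ φ) atTop (nhds x))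
    (hpos : ∀ n, 0 < globalSlope f (z n))
    (hsum : ∑' n, globalSlope f (z n) * ENNReal.ofReal (dist (z n) (z (n + 1))) ≠ ⊤) :
    liminf (fun n => f (z n)) atTop = ⨅ x, f x :=
  stmt3_general f hbot z hnoconv hsum
end

section
/- Let X be a compact topological space and f : X → ℝ continuous, g : X → ℝ lower semicontinuous. Suppose that for every x ∈ X, either (i) f(x) < g(x), or (ii) there exists z ∈ X with (f(x)−f(z))⁺ < (g(x)−g(z))⁺. Then f(x) < g(x) for every x ∈ X. -/
lemma lsc_exists_min {X : Type*} [TopologicalSpace X] [CompactSpace X] [Nonempty X]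
    (φ : X → ℝ) (hφ : LowerSemicontinuous φ) : ∃ x₀, ∀ x, φ x₀ ≤ φ x := by
  set t : X → Set X := fun x => φ ⁻¹' Set.Iic (φ x) with ht
  have hcl : ∀ x, IsClosed (t x) := fun x => hφ.isClosed_preimage (φ x)
  have hcmp : ∀ x, IsCompact (t x) := fun x => (hcl x).isCompact
  have hne : ∀ x, (t x).Nonempty := fun x => ⟨x, Set.mem_preimage.2 Set.self_mem_Iic⟩
  have hdir : Directed (· ⊇ ·) t := by
    intro x y
    rcases le_total (φ x) (φ y) with h | h
    · exact ⟨x, subset_rfl, fun z hz => le_trans hz h⟩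
    · exact ⟨y, fun z hz => le_trans hz h, subset_rfl⟩
  obtain ⟨y, hy⟩ := IsCompact.nonempty_iInter_of_directed_nonempty_isCompact_isClosed
    t hdir hne hcmp hcl
  exact ⟨y, fun x => Set.mem_iInter.1 hy x⟩

/-- Strict comparison on a compact space, real-valued case:
if at every point either `f x < g x` or some `z` gives strictly more positive descent
to `g` than to `f`, then `f < g` everywhere. -/
theorem stmt7 {X : Type*} [TopologicalSpace X] [CompactSpace X]
    (f g : X → ℝ) (hf : Continuous f) (hg : LowerSemicontinuous g)
    (h : ∀ x, f x < g x ∨ ∃ z, max (f x - f z) 0 < max (g x - g z) 0) :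
    ∀ x, f x < g x := by
  intro x
  have : Nonempty X := ⟨x⟩
  have hφ : LowerSemicontinuous (fun y => g y - f y) := by
    simpa [sub_eq_add_neg] using hg.add hf.neg.lowerSemicontinuous
  obtain ⟨x₀, hx₀⟩ := lsc_exists_min _ hφ
  -- at x₀, case (ii) is impossible
  have hmin : f x₀ < g x₀ := by
    rcases h x₀ with h1 | ⟨z, hz⟩
    · exact h1
    · exfalso
      have hpos : 0 < g x₀ - g z := by
        by_contra hneg
        push_neg at hneg
        rw [max_eq_right hneg] at hz
        exact absurd hz (not_lt.2 (le_max_right _ _))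
      have h2 : f x₀ - f z < g x₀ - g z := by
        calc f x₀ - f z ≤ max (f x₀ - f z) 0 := le_max_left _ _
          _ < max (g x₀ - g z) 0 := hz
          _ = g x₀ - g z := max_eq_left hpos.le
      have := hx₀ z
      linarith
  have := hx₀ x
  linarith
end

section
/- Let X be a compact topological space, f : X → ℝ continuous and g : X → ℝ ∪ {+∞} proper lower semicontinuous. Suppose that for every x ∈ dom g, either f(x) < g(x), or there exists z ∈ dom g with (f(x)−f(z))⁺ < (g(x)−g(z))⁺. Then f(x) < g(x) for every x ∈ dom g. -/
/-!
The function `ψ = g - f` is lower semicontinuous, so it attains its minimum on the compact space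
`X` at some `w`. If `g x₀ ≤ f x₀` for some `x₀ ∈ dom g`, then `ψ w ≤ ψ x₀ ≤ 0`, so `w ∈ dom g` and
`g w ≤ f w`. The hypothesis then yields `z ∈ dom g` with `g w - g z > 0` and
`f w - f z < g w - g z`, that is `ψ z < ψ w`, contradicting minimality.
-/

open Set

lemma EReal.lowerSemicontinuous_sub_coe {X : Type*} [TopologicalSpace X] {g : X → EReal}
    {f : X → ℝ} (hg : LowerSemicontinuous g) (hgbot : ∀ x, g x ≠ ⊥) (hf : Continuous f) :
    LowerSemicontinuous fun x => g x - f x :=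
  hg.add' (continuous_coe_real_ereal.comp hf.neg).lowerSemicontinuous fun x =>
    EReal.continuousAt_add (Or.inr (EReal.coe_ne_bot _)) (Or.inl (hgbot x))

lemma sub_lt_sub_of_max_sub_zero_lt {a b c d : ℝ} (h : max (a - b) 0 < max (c - d) 0) :
    d - b < c - a := by
  have hcd : 0 < c - d := by simpa using (le_max_right (a - b) 0).trans_lt h
  linarith [le_max_left (a - b) 0, max_eq_left hcd.le]

lemma EReal.sub_coe_lt_sub_coe_of_max_sub_zero_lt {x y : EReal} (hx : x ≠ ⊤) (hxbot : x ≠ ⊥)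
    (hy : y ≠ ⊤) (hybot : y ≠ ⊥) {a b : ℝ}
    (h : max ((a : EReal) - b) 0 < max (x - y) 0) : y - b < x - a := by
  lift x to ℝ using ⟨hx, hxbot⟩
  lift y to ℝ using ⟨hy, hybot⟩
  rw [← EReal.coe_zero, ← EReal.coe_sub, ← EReal.coe_sub, ← EReal.coe_strictMono.monotone.map_max,
    ← EReal.coe_strictMono.monotone.map_max, EReal.coe_lt_coe_iff] at h
  rw [← EReal.coe_sub, ← EReal.coe_sub, EReal.coe_lt_coe_iff]
  exact sub_lt_sub_of_max_sub_zero_lt h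

theorem stmt8_general {X : Type*} [TopologicalSpace X] [CompactSpace X]
    (f : X → ℝ) (g : X → EReal) (hf : Continuous f)
    (hgbot : ∀ x, g x ≠ ⊥)
    (hg : LowerSemicontinuous g)
    (h : ∀ x, g x ≠ ⊤ → (f x : EReal) < g x ∨
      ∃ z, g z ≠ ⊤ ∧ max ((f x : EReal) - (f z : EReal)) 0 < max (g x - g z) 0) :
    ∀ x, g x ≠ ⊤ → (f x : EReal) < g x := by
  by_contra! ⟨x₀, -, hx₀⟩
  obtain ⟨w, -, hw⟩ := ((EReal.lowerSemicontinuous_sub_coe hg hgbot hf).lowerSemicontinuousOn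
    univ).exists_isMinOn ⟨x₀, mem_univ _⟩ isCompact_univ
  have hψw : g w - f w ≤ 0 := (hw (mem_univ x₀)).trans (EReal.sub_nonpos.2 hx₀)
  have hwtop : g w ≠ ⊤ := fun htop => by simp [htop] at hψw
  rcases h w hwtop with hlt | ⟨z, hztop, hz⟩
  · exact (EReal.sub_nonpos.1 hψw).not_gt hlt
  · exact (hw (mem_univ z)).not_gt
      (EReal.sub_coe_lt_sub_coe_of_max_sub_zero_lt hwtop (hgbot w) hztop (hgbot z) hz)

/-- Strict comparison on a compact space, extended-valued case:
`f : X → ℝ` continuous, `g : X → ℝ ∪ {+∞}` proper lsc; if at every `x ∈ dom g`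
either `f x < g x` or some `z ∈ dom g` gives strictly more positive descent to `g`
than to `f`, then `f < g` on `dom g`. -/
theorem stmt8 {X : Type*} [TopologicalSpace X] [CompactSpace X]
    (f : X → ℝ) (g : X → EReal) (hf : Continuous f)
    (hgbot : ∀ x, g x ≠ ⊥) (hgproper : ∃ x, g x ≠ ⊤)
    (hg : LowerSemicontinuous g)
    (h : ∀ x, g x ≠ ⊤ → (f x : EReal) < g x ∨
      ∃ z, g z ≠ ⊤ ∧ max ((f x : EReal) - (f z : EReal)) 0 < max (g x - g z) 0) :
    ∀ x, g x ≠ ⊤ → (f x : EReal) < g x :=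
  stmt8_general f g hf hgbot hg h
end

section
/- Let (X,d) be a metric space, μ a probability measure on X, and define the average descent modulus ℳ[f](x) = ∫_X Δ⁺f(x,y) μ(dy) where Δ⁺f(x,y) = (f(x)−f(y))⁺/d(x,y) for y ≠ x and 0 for y = x. Fix ρ > 0. If f, g are μ-measurable, x ∈ dom g, δ > 0 and ℳ[f](x) < δ < ℳ[g](x), then there exists z ∈ dom g with (f(x)−f(z))⁺ < (1+ρ)(g(x)−g(z))⁺ and g(x) − g(z) > (ρ/(1+ρ))·δ·d(x,z). -/
/-!
If no `z` works, then for every `y` either `(f x - f y)⁺ ≥ (1 + ρ) (g x - g y)⁺` or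
`g x - g y ≤ ρδ/(1 + ρ) · d(x,y)`, so in both cases
`Δ⁺g(x,y) ≤ Δ⁺f(x,y)/(1 + ρ) + ρδ/(1 + ρ)`. Integrating against the probability measure `μ`
gives `ℳ[g](x) ≤ ℳ[f](x)/(1 + ρ) + ρδ/(1 + ρ) < δ/(1 + ρ) + ρδ/(1 + ρ) = δ`, a contradiction.
-/

open MeasureTheory
open scoped ENNReal

/-- The average descent modulus `ℳ[f](x) = ∫ Δ⁺f(x,y) μ(dy)` for `x ∈ dom f`,
`+∞` otherwise, where `Δ⁺f(x,y) = (f(x)−f(y))⁺/d(x,y)` (and `0` when `y = x`). -/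
noncomputable def avgDescent {X : Type*} [MetricSpace X] [MeasurableSpace X]
    (μ : Measure X) (f : X → EReal) (x : X) : ℝ≥0∞ :=
  if f x = ⊤ then ⊤
  else ∫⁻ y, ENNReal.ofReal ((max (f x - f y) 0).toReal / dist x y) ∂μ

namespace EReal

lemma sub_ne_top_of_ne_top_of_ne_bot {x y : EReal} (hx : x ≠ ⊤) (hy : y ≠ ⊥) : x - y ≠ ⊤ := by
  induction x <;> induction y <;> simp_all [← EReal.coe_sub]

lemma toReal_max_zero_le {u : EReal} {r : ℝ} (hu : u ≤ r) (hr : 0 ≤ r) :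
    (max u 0).toReal ≤ r := by
  have : max u 0 ≤ r := max_le hu (by exact_mod_cast hr)
  simpa using EReal.toReal_le_toReal this (by simp) (coe_ne_top r)

lemma mul_toReal_le_toReal {c : ℝ} {a b : EReal} (hc : 0 ≤ c) (ha : 0 ≤ a) (hb : b ≠ ⊤)
    (h : (c : EReal) * a ≤ b) : c * a.toReal ≤ b.toReal := by
  have hca : (c : EReal) * a ≠ ⊥ :=
    ne_bot_of_le_ne_bot (by simp) (mul_nonneg (by exact_mod_cast hc) ha)
  simpa [EReal.toReal_mul] using EReal.toReal_le_toReal h hca hb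

lemma toReal_max_zero_le_inv_mul_add {u v : EReal} {ρ r : ℝ} (hv : v ≠ ⊤) (hρ : 0 < ρ)
    (hr : 0 ≤ r) (h : u ≠ ⊥ → max v 0 < ((1 + ρ : ℝ) : EReal) * max u 0 → u ≤ r) :
    (max u 0).toReal ≤ (1 + ρ)⁻¹ * (max v 0).toReal + r := by
  have hsF : 0 ≤ (1 + ρ)⁻¹ * (max v 0).toReal := by positivity
  rcases eq_or_ne u ⊥ with rfl | hu
  · simpa using add_nonneg hsF hr
  by_cases hlt : max v 0 < ((1 + ρ : ℝ) : EReal) * max u 0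
  · linarith [toReal_max_zero_le (h hu hlt) hr]
  · have := mul_toReal_le_toReal (by positivity) (le_max_right u 0)
      (max_ne_top hv zero_ne_top) (not_lt.1 hlt)
    have hG : (max u 0).toReal ≤ (1 + ρ)⁻¹ * (max v 0).toReal := by
      rw [inv_mul_eq_div, le_div_iff₀ (by positivity)]
      linarith
    linarith

end EReal

lemma ENNReal.mul_add_mul_lt_of_lt {s t a b : ℝ≥0∞} (hs₀ : s ≠ 0) (hs : s ≠ ⊤) (ht : t ≠ ⊤)
    (hb : b ≠ ⊤) (hst : s + t = 1) (hab : a < b) : s * a + t * b < b :=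
  calc s * a + t * b < s * b + t * b :=
        ENNReal.add_lt_add_right (ENNReal.mul_ne_top ht hb)
          ((ENNReal.mul_lt_mul_iff_right hs₀ hs).2 hab)
    _ = b := by rw [← add_mul, hst, one_mul]

lemma MeasureTheory.lintegral_le_mul_lintegral_add {α : Type*} [MeasurableSpace α]
    {μ : Measure α} [IsProbabilityMeasure μ] {φ ψ : α → ℝ≥0∞} {c k : ℝ≥0∞} (hc : c ≠ ⊤)
    (h : ∀ y, φ y ≤ c * ψ y + k) : ∫⁻ y, φ y ∂μ ≤ c * ∫⁻ y, ψ y ∂μ + k :=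
  calc ∫⁻ y, φ y ∂μ ≤ ∫⁻ y, c * ψ y + k ∂μ := lintegral_mono h
    _ = c * ∫⁻ y, ψ y ∂μ + k := by
      rw [lintegral_add_right _ measurable_const, lintegral_const_mul' c _ hc, lintegral_const,
        measure_univ, mul_one]

lemma ENNReal.ofReal_div_le_mul_add {F G s θ d : ℝ} (hF : 0 ≤ F) (hs : 0 ≤ s) (hθ : 0 ≤ θ)
    (hd : 0 ≤ d) (h : G ≤ s * F + θ * d) :
    ENNReal.ofReal (G / d) ≤ ENNReal.ofReal s * ENNReal.ofReal (F / d) + ENNReal.ofReal θ := by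
  rw [← ENNReal.ofReal_mul hs, ← ENNReal.ofReal_add (by positivity) hθ]
  apply ENNReal.ofReal_le_ofReal
  rcases hd.eq_or_lt with rfl | hd
  · simpa using hθ
  · rw [div_le_iff₀ hd]
    calc G ≤ s * F + θ * d := h
      _ = (s * (F / d) + θ) * d := by field_simp

section DescentSlope

variable {X : Type*} [MetricSpace X]

/-- `Δ⁺f(x,y)`: division by `dist x x = 0` yields the paper's value `0` at `y = x`, but
`toReal ⊤ = 0` also yields the junk value `0` where `f x - f y = ⊤`. -/
noncomputable def descentSlope (f : X → EReal) (x y : X) : ℝ≥0∞ :=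
  ENNReal.ofReal ((max (f x - f y) 0).toReal / dist x y)

variable [MeasurableSpace X]

lemma avgDescent_of_ne_top (μ : Measure X) {f : X → EReal} {x : X} (hx : f x ≠ ⊤) :
    avgDescent μ f x = ∫⁻ y, descentSlope f x y ∂μ :=
  if_neg hx

lemma ne_top_of_avgDescent_ne_top {μ : Measure X} {f : X → EReal} {x : X}
    (h : avgDescent μ f x ≠ ⊤) : f x ≠ ⊤ :=
  fun hx => h (if_pos hx)

end DescentSlope

theorem stmt12_general {X : Type*} [MetricSpace X] [MeasurableSpace X]
    (μ : Measure X) [IsProbabilityMeasure μ]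
    (f g : X → EReal)
    (hfbot : ∀ y, f y ≠ ⊥)
    (ρ : ℝ) (hρ : 0 < ρ) (x : X) (hx : g x ≠ ⊤) (δ : ℝ) (hδ : 0 < δ)
    (hlt : avgDescent μ f x < ENNReal.ofReal δ)
    (hgt : ENNReal.ofReal δ < avgDescent μ g x) :
    ∃ z, g z ≠ ⊤ ∧
      max (f x - f z) 0 < ((1 + ρ : ℝ) : EReal) * max (g x - g z) 0 ∧
      ((ρ / (1 + ρ) * δ * dist x z : ℝ) : EReal) < g x - g z := by
  by_contra! H
  have hfx : f x ≠ ⊤ := ne_top_of_avgDescent_ne_top (hlt.trans ENNReal.ofReal_lt_top).ne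
  have hslope : ∀ z, descentSlope g x z ≤ ENNReal.ofReal (1 + ρ)⁻¹ * descentSlope f x z +
      ENNReal.ofReal (ρ / (1 + ρ)) * ENNReal.ofReal δ := by
    intro z
    rw [← ENNReal.ofReal_mul (by positivity)]
    refine ENNReal.ofReal_div_le_mul_add (EReal.toReal_nonneg (le_max_right _ _)) (by positivity)
      (by positivity) dist_nonneg ?_
    refine EReal.toReal_max_zero_le_inv_mul_add
      (EReal.sub_ne_top_of_ne_top_of_ne_bot hfx (hfbot z)) hρ (by positivity) fun hu => H z ?_
    contrapose! hu
    rw [hu, EReal.sub_top]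
  have hweights : ENNReal.ofReal (1 + ρ)⁻¹ + ENNReal.ofReal (ρ / (1 + ρ)) = 1 := by
    rw [← ENNReal.ofReal_add (by positivity) (by positivity), ← ENNReal.ofReal_one]
    congr 1
    field_simp
  rw [avgDescent_of_ne_top μ hfx] at hlt
  rw [avgDescent_of_ne_top μ hx] at hgt
  have hmix := ENNReal.mul_add_mul_lt_of_lt (ENNReal.ofReal_pos.2 (by positivity)).ne'
    ENNReal.ofReal_ne_top ENNReal.ofReal_ne_top ENNReal.ofReal_ne_top hweights hlt
  exact (hgt.trans_le (lintegral_le_mul_lintegral_add ENNReal.ofReal_ne_top hslope)).trans hmix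
    |>.false

/-- Metric compatibility of the average descent modulus with
`θ_ρ(δ) = ρδ/(1+ρ)`. -/
theorem stmt12 {X : Type*} [MetricSpace X] [MeasurableSpace X]
    (μ : Measure X) [IsProbabilityMeasure μ]
    (f g : X → EReal) (hfm : Measurable f) (hgm : Measurable g)
    (hfbot : ∀ y, f y ≠ ⊥) (hgbot : ∀ y, g y ≠ ⊥)
    (hfproper : ∃ y, f y ≠ ⊤) (hgproper : ∃ y, g y ≠ ⊤)
    (ρ : ℝ) (hρ : 0 < ρ) (x : X) (hx : g x ≠ ⊤) (δ : ℝ) (hδ : 0 < δ)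
    (hlt : avgDescent μ f x < ENNReal.ofReal δ)
    (hgt : ENNReal.ofReal δ < avgDescent μ g x) :
    ∃ z, g z ≠ ⊤ ∧
      max (f x - f z) 0 < ((1 + ρ : ℝ) : EReal) * max (g x - g z) 0 ∧
      ((ρ / (1 + ρ) * δ * dist x z : ℝ) : EReal) < g x - g z :=
  stmt12_general μ f g hfbot ρ hρ x hx δ hδ hlt hgt
end

section
/- Let X = ℕ (with positive integers), d(m,n) = |m−n|, and T[f](k) = sup_{m∈ℕ} (f(k)−f(m))⁺. For n ≥ 2 define f_n(m) = 0 if m = n and 1 otherwise. Then T[f_n](1) = 1 and T[f_1](1) = 0, and for every n ≥ 2 the only point z with f_n(z) < f_n(1) is z = n, for which (f_n(1)−f_n(n))/d(1,n) = 1/(n−1). Consequently, there is no function θ : (0,1) → (0,∞) with θ(δ) > 0 such that for every n ≥ 2 there exists z with θ(δ)·d(1,z) < f_n(1) − f_n(z). -/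
/-- The functions `f_n : ℕ → ℝ`, equal to `1` everywhere except `f_n(n) = 0`. -/
def fIndic (n m : ℕ) : ℝ := if m = n then 0 else 1

lemma fIndic_nonneg (n m : ℕ) : 0 ≤ fIndic n m := by
  unfold fIndic; split <;> norm_num

lemma fIndic_le_one (n m : ℕ) : fIndic n m ≤ 1 := by
  unfold fIndic; split <;> norm_num

lemma fIndic_of_ne (n m : ℕ) (h : m ≠ n) : fIndic n m = 1 := by
  simp [fIndic, h]

lemma fIndic_self (n : ℕ) : fIndic n n = 0 := by simp [fIndic]

/-- On `X = {1,2,3,…}` with `d(m,n) = |m−n|` and the descent modulus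
`T[f](k) = sup_m (f(k)−f(m))⁺`: one has `T[f_n](1) = 1` for `n ≥ 2`, `T[f_1](1) = 0`,
the only point of descent of `f_n` from `1` is `z = n` with descent quotient `1/(n−1)`,
and consequently no positive function `θ` on `(0,1)` can witness metric compatibility. -/
theorem stmt15 :
    (∀ n : ℕ, 2 ≤ n →
      (⨆ m : {m : ℕ // 1 ≤ m}, max (fIndic n 1 - fIndic n m.1) 0) = 1) ∧
    (⨆ m : {m : ℕ // 1 ≤ m}, max (fIndic 1 1 - fIndic 1 m.1) 0) = 0 ∧
    (∀ n : ℕ, 2 ≤ n → ∀ z : ℕ, 1 ≤ z → fIndic n z < fIndic n 1 → z = n) ∧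
    (∀ n : ℕ, 2 ≤ n →
      (fIndic n 1 - fIndic n n) / |(1 : ℝ) - (n : ℝ)| = 1 / ((n : ℝ) - 1)) ∧
    ¬ ∃ θ : ℝ → ℝ, (∀ δ : ℝ, 0 < δ → δ < 1 → 0 < θ δ) ∧
      (∀ δ : ℝ, 0 < δ → δ < 1 → ∀ n : ℕ, 2 ≤ n → ∃ z : ℕ, 1 ≤ z ∧
        θ δ * |(1 : ℝ) - (z : ℝ)| < fIndic n 1 - fIndic n z) := by
  have key : ∀ n : ℕ, 2 ≤ n → ∀ z : ℕ, 1 ≤ z → fIndic n z < fIndic n 1 → z = n := by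
    intro n hn z _ hlt
    by_contra hne
    rw [fIndic_of_ne n z hne] at hlt
    exact absurd (fIndic_le_one n 1) (not_le.mpr hlt)
  refine ⟨?_, ?_, key, ?_, ?_⟩
  · intro n hn
    have hbdd : BddAbove (Set.range fun m : {m : ℕ // 1 ≤ m} =>
        max (fIndic n 1 - fIndic n m.1) 0) := by
      refine ⟨1, ?_⟩
      rintro x ⟨m, rfl⟩
      have h1 := fIndic_nonneg n m.1
      have h2 := fIndic_le_one n 1
      simp only [max_le_iff]
      constructor <;> linarith
    apply le_antisymm
    · apply ciSup_le
      intro m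
      have h1 := fIndic_nonneg n m.1
      have h2 := fIndic_le_one n 1
      simp only [max_le_iff]
      constructor <;> linarith
    · refine le_trans ?_ (le_ciSup hbdd (⟨n, by omega⟩ : {m : ℕ // 1 ≤ m}))
      rw [fIndic_of_ne n 1 (by omega), fIndic_self n, sub_zero]
      norm_num
  · apply le_antisymm
    · apply ciSup_le
      intro m
      have h1 := fIndic_nonneg 1 m.1
      have h2 : fIndic 1 1 = 0 := fIndic_self 1
      simp only [max_le_iff, h2]
      constructor <;> linarith
    · have hbdd : BddAbove (Set.range fun m : {m : ℕ // 1 ≤ m} =>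
          max (fIndic 1 1 - fIndic 1 m.1) 0) := by
        refine ⟨1, ?_⟩
        rintro x ⟨m, rfl⟩
        have h1 := fIndic_nonneg 1 m.1
        have h2 := fIndic_le_one 1 1
        simp only [max_le_iff]
        constructor <;> linarith
      refine le_trans ?_ (le_ciSup hbdd (⟨1, le_refl 1⟩ : {m : ℕ // 1 ≤ m}))
      rw [fIndic_self 1]
      norm_num
  · intro n hn
    have h1 : fIndic n 1 = 1 := fIndic_of_ne n 1 (by omega)
    have h2 : fIndic n n = 0 := fIndic_self n
    have hn2 : (2 : ℝ) ≤ (n : ℝ) := by exact_mod_cast hn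
    rw [h1, h2, sub_zero, abs_of_nonpos (by linarith)]
    ring_nf
  · rintro ⟨θ, hpos, h⟩
    have ht : 0 < θ (1/2) := hpos _ (by norm_num) (by norm_num)
    obtain ⟨n, hn⟩ := exists_nat_gt (1 / θ (1/2) + 1)
    have hn2 : 2 ≤ n := by
      have hinv : (0:ℝ) < 1 / θ (1/2) := by positivity
      have : (1:ℝ) < 1 / θ (1/2) + 1 := by linarith
      have : (1:ℝ) < (n:ℝ) := lt_trans this hn
      exact_mod_cast this
    obtain ⟨z, hz1, hlt⟩ := h (1/2) (by norm_num) (by norm_num) n hn2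
    have hz : z = n := by
      apply key n hn2 z hz1
      have hnn : 0 ≤ θ (1/2) * |(1:ℝ) - (z:ℝ)| := by positivity
      linarith
    rw [hz] at hlt
    rw [fIndic_of_ne n 1 (by omega), fIndic_self, sub_zero,
      abs_of_nonpos (by
        have : (2:ℝ) ≤ (n:ℝ) := by exact_mod_cast hn2
        linarith)] at hlt
    have hnR : (1:ℝ) / θ (1/2) + 1 < (n:ℝ) := hn
    have hcancel : θ (1/2) * (1 / θ (1/2)) = 1 := mul_one_div_cancel (ne_of_gt ht)
    nlinarith [mul_lt_mul_of_pos_left hnR ht]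
end

section
/- Define g : [1,∞) → [0,1] by g(x) = 1/(n+1) + (1/(n(n+1)))·(x−(n+1))^{n(n+1)} for x ∈ [n, n+1), n ≥ 1 a positive integer. Then g is continuous on [1,∞), inf g = 0, g never attains the value 0, and the local slope s[g](x) = limsup_{y→x} (g(x)−g(y))⁺/|x−y| is strictly positive at every x ∈ [1,∞), while liminf_{x→n} s[g](x) = 0 for every integer n ≥ 2. -/
/-!
On the block `[n, n+1]` the function equals `1/(n+1) + (n+1-x)^m / m` with `m = n(n+1)` (the
exponent is even), which decreases from `1/n` to `1/(n+1)`; so adjacent blocks glue continuously,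
and the values `1/n` show that the infimum `0` is approached but never attained.
Bounding `a^m - b^m` between `m b^(m-1) (a-b)` and `m a^(m-1) (a-b)` traps the difference
quotients of `g` on `[x, z]` between `(n+1-z)^(m-1)` and `(n+1-x)^(m-1)`. To the right of every
point `g` therefore drops at a positive rate, so the slope is positive; at a point `y` just left
of an integer `n` the slope is at most `(n-y)^(m-1)`, which tends to `0` as `y → n`.
-/

open Filter
open scoped ENNReal Topology

/-- The local slope of `g : ℝ → ℝ` relative to the space `X = [1,∞)`:
`s[g](x) = limsup_{y → x, y ∈ [1,∞), y ≠ x} (g(x)−g(y))⁺/|x−y|`. -/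
noncomputable def slopeIci1 (g : ℝ → ℝ) (x : ℝ) : ℝ≥0∞ :=
  limsup (fun y => ENNReal.ofReal (max (g x - g y) 0 / |x - y|))
    (𝓝[Set.Ici 1 \ {x}] x)

open Set

theorem le_pow_sub_pow_of_le {a b : ℝ} (hb : 0 ≤ b) (hba : b ≤ a) (m : ℕ) :
    m * b ^ (m - 1) * (a - b) ≤ a ^ m - b ^ m := by
  rw [← geom_sum₂_mul]
  gcongr ?_ * _
  calc (m : ℝ) * b ^ (m - 1) = ∑ _i ∈ Finset.range m, b ^ (m - 1) := by simp
    _ ≤ ∑ i ∈ Finset.range m, a ^ i * b ^ (m - 1 - i) := by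
      refine Finset.sum_le_sum fun i hi => ?_
      rw [← pow_mul_pow_sub b (Nat.le_sub_one_of_lt (Finset.mem_range.1 hi))]
      gcongr

theorem pow_sub_pow_le_of_le {a b : ℝ} (hb : 0 ≤ b) (hba : b ≤ a) (m : ℕ) :
    a ^ m - b ^ m ≤ m * a ^ (m - 1) * (a - b) := by
  rw [← geom_sum₂_mul]
  gcongr ?_ * _
  calc ∑ i ∈ Finset.range m, a ^ i * b ^ (m - 1 - i)
      ≤ ∑ _i ∈ Finset.range m, a ^ (m - 1) := by
        refine Finset.sum_le_sum fun i hi => ?_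
        rw [← pow_mul_pow_sub a (Nat.le_sub_one_of_lt (Finset.mem_range.1 hi))]
        gcongr
        exact pow_nonneg (hb.trans hba) _
    _ = m * a ^ (m - 1) := by simp

theorem ofReal_le_slopeIci1 {g : ℝ → ℝ} {x c δ : ℝ} (hx : 1 ≤ x) (hδ : 0 < δ)
    (h : ∀ z ∈ Ioo x (x + δ), c * (z - x) ≤ g x - g z) :
    ENNReal.ofReal c ≤ slopeIci1 g x := by
  have hright : 𝓝[>] x ≤ 𝓝[Ici 1 \ {x}] x :=
    nhdsWithin_mono _ fun z hz => ⟨hx.trans (le_of_lt hz), ne_of_gt hz⟩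
  refine le_trans ?_ (limsup_le_limsup_of_le hright)
  refine le_limsup_of_frequently_le (Eventually.frequently ?_)
  filter_upwards [Ioo_mem_nhdsGT (by linarith : x < x + δ)] with z hz
  have hzx : 0 < z - x := sub_pos.2 hz.1
  refine ENNReal.ofReal_le_ofReal ?_
  rw [abs_sub_comm, abs_of_pos hzx, le_div_iff₀ hzx]
  exact (h z hz).trans (le_max_left _ _)

theorem slopeIci1_le_ofReal {g : ℝ → ℝ} {y B : ℝ} {U : Set ℝ} (hB : 0 ≤ B) (hU : U ∈ 𝓝 y)
    (h : ∀ z ∈ U, g y - g z ≤ B * |y - z|) :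
    slopeIci1 g y ≤ ENNReal.ofReal B := by
  refine limsup_le_of_le (by isBoundedDefault) ?_
  filter_upwards [mem_nhdsWithin_of_mem_nhds hU, self_mem_nhdsWithin] with z hzU hz
  have hyz : 0 < |y - z| := abs_pos.2 (sub_ne_zero.2 (Ne.symm hz.2))
  exact ENNReal.ofReal_le_ofReal ((div_le_iff₀ hyz).2 (max_le (h z hzU) (by positivity)))

noncomputable def blockProfile (n : ℕ) (x : ℝ) : ℝ :=
  1 / (n + 1) + (n + 1 - x) ^ (n * (n + 1)) / (n * (n + 1) : ℕ)

namespace blockProfile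

theorem continuous (n : ℕ) : Continuous (blockProfile n) := by
  unfold blockProfile; fun_prop

theorem eq_sub_pow (n : ℕ) (x : ℝ) :
    blockProfile n x = 1 / (n + 1) + (x - (n + 1)) ^ (n * (n + 1)) / (n * (n + 1)) := by
  rw [blockProfile, ← neg_sub, (Nat.even_mul_succ_self n).neg_pow]
  push_cast; ring

theorem apply_natCast {n : ℕ} (hn : 1 ≤ n) : blockProfile n n = 1 / n := by
  have : (0 : ℝ) < n := by exact_mod_cast hn
  simp only [blockProfile, add_sub_cancel_left, one_pow]
  push_cast
  field_simp

theorem apply_natCast_add_one (n : ℕ) : blockProfile n (n + 1) = 1 / (n + 1) := by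
  rcases n with _ | n <;> simp [blockProfile]

theorem pos {n : ℕ} {x : ℝ} (hx : x ≤ n + 1) : 0 < blockProfile n x :=
  add_pos_of_pos_of_nonneg (by positivity)
    (div_nonneg (pow_nonneg (by linarith) _) (by positivity))

theorem sub_eq (n : ℕ) (x z : ℝ) :
    blockProfile n x - blockProfile n z =
      ((n + 1 - x) ^ (n * (n + 1)) - (n + 1 - z) ^ (n * (n + 1))) / (n * (n + 1) : ℕ) := by
  unfold blockProfile; ring

theorem le_sub {n : ℕ} (hn : 1 ≤ n) {x z : ℝ} (hxz : x ≤ z) (hz : z ≤ n + 1) :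
    (n + 1 - z) ^ (n * (n + 1) - 1) * (z - x) ≤ blockProfile n x - blockProfile n z := by
  have hm : (0 : ℝ) < (n * (n + 1) : ℕ) := by positivity
  rw [sub_eq, le_div_iff₀ hm]
  linarith [le_pow_sub_pow_of_le (by linarith : (0 : ℝ) ≤ n + 1 - z)
    (by linarith : (n : ℝ) + 1 - z ≤ n + 1 - x) (n * (n + 1))]

theorem sub_le {n : ℕ} (hn : 1 ≤ n) {x z : ℝ} (hxz : x ≤ z) (hz : z ≤ n + 1) :
    blockProfile n x - blockProfile n z ≤ (n + 1 - x) ^ (n * (n + 1) - 1) * (z - x) := by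
  have hm : (0 : ℝ) < (n * (n + 1) : ℕ) := by positivity
  rw [sub_eq, div_le_iff₀ hm]
  linarith [pow_sub_pow_le_of_le (by linarith : (0 : ℝ) ≤ n + 1 - z)
    (by linarith : (n : ℝ) + 1 - z ≤ n + 1 - x) (n * (n + 1))]

end blockProfile

theorem exists_nat_mem_Ico {x : ℝ} (hx : 1 ≤ x) : ∃ n : ℕ, 1 ≤ n ∧ x ∈ Ico (n : ℝ) (n + 1) :=
  ⟨⌊x⌋₊, Nat.le_floor (by exact_mod_cast hx), Nat.floor_le (by linarith), Nat.lt_floor_add_one x⟩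

def EqOnBlockProfiles (g : ℝ → ℝ) : Prop :=
  ∀ n : ℕ, 1 ≤ n → EqOn g (blockProfile n) (Icc n (n + 1))

theorem eqOnBlockProfiles_of_eqOn_Ico {g : ℝ → ℝ}
    (h : ∀ n : ℕ, 1 ≤ n → EqOn g (blockProfile n) (Ico n (n + 1))) : EqOnBlockProfiles g := by
  intro n hn x hx
  rcases hx.2.lt_or_eq with hlt | rfl
  · exact h n hn ⟨hx.1, hlt⟩
  · calc g (n + 1) = blockProfile (n + 1) ((n + 1 : ℕ) : ℝ) := by
          exact_mod_cast h (n + 1) (by omega) (left_mem_Ico.2 (by linarith))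
      _ = 1 / (n + 1) := by rw [blockProfile.apply_natCast (by omega)]; push_cast; rfl
      _ = blockProfile n (n + 1) := (blockProfile.apply_natCast_add_one n).symm

namespace EqOnBlockProfiles

variable {g : ℝ → ℝ}

theorem apply_natCast (hg : EqOnBlockProfiles g) {n : ℕ} (hn : 1 ≤ n) : g n = 1 / n :=
  (hg n hn (left_mem_Icc.2 (by linarith))).trans (blockProfile.apply_natCast hn)

theorem continuousOn_Icc_one (hg : EqOnBlockProfiles g) (N : ℕ) :
    ContinuousOn g (Icc 1 (N + 1)) := by
  induction N with
  | zero => simp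
  | succ N ih =>
    have hblock : ContinuousOn g (Icc ((N + 1 : ℕ) : ℝ) ((N + 1 : ℕ) + 1)) :=
      (blockProfile.continuous _).continuousOn.congr (hg (N + 1) (by omega))
    push_cast at hblock ⊢
    have hN : (1 : ℝ) ≤ N + 1 := by linarith [N.cast_nonneg (α := ℝ)]
    rw [← Icc_union_Icc_eq_Icc hN (by linarith : (N : ℝ) + 1 ≤ N + 1 + 1)]
    exact ih.union_of_isClosed hblock isClosed_Icc isClosed_Icc

theorem continuousOn (hg : EqOnBlockProfiles g) : ContinuousOn g (Ici 1) := by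
  intro x hx
  obtain ⟨N, hN⟩ := exists_nat_gt x
  refine (hg.continuousOn_Icc_one N x ⟨hx, by linarith⟩).mono_of_mem_nhdsWithin ?_
  exact mem_of_superset (inter_mem_nhdsWithin _ (Iio_mem_nhds (by linarith : x < N + 1)))
    fun z hz => ⟨hz.1, le_of_lt hz.2⟩

theorem pos (hg : EqOnBlockProfiles g) {x : ℝ} (hx : 1 ≤ x) : 0 < g x := by
  obtain ⟨n, hn, hxn⟩ := exists_nat_mem_Ico hx
  rw [hg n hn (Ico_subset_Icc_self hxn)]
  exact blockProfile.pos hxn.2.le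

theorem isGLB_image_Ici_one (hg : EqOnBlockProfiles g) : IsGLB (g '' Ici 1) 0 := by
  refine isGLB_of_mem_closure (by rintro _ ⟨x, hx, rfl⟩; exact (hg.pos hx).le) ?_
  refine mem_closure_of_tendsto (f := fun n : ℕ => g (n + 1)) (b := atTop) ?_
    (Eventually.of_forall fun n => mem_image_of_mem g (by simp : (n : ℝ) + 1 ∈ Ici 1))
  convert tendsto_one_div_add_atTop_nhds_zero_nat (𝕜 := ℝ) using 2 with n
  exact_mod_cast hg.apply_natCast (Nat.le_add_left 1 n)

theorem slopeIci1_pos (hg : EqOnBlockProfiles g) {x : ℝ} (hx : 1 ≤ x) : 0 < slopeIci1 g x := by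
  obtain ⟨n, hn, hxn⟩ := exists_nat_mem_Ico hx
  set δ : ℝ := (n + 1 - x) / 2 with hδ_def
  have hδ : 0 < δ := by linarith [hxn.2]
  refine (ENNReal.ofReal_pos.2 (pow_pos hδ (n * (n + 1) - 1))).trans_le
    (ofReal_le_slopeIci1 hx hδ fun z hz => ?_)
  have hzn : z ∈ Icc (n : ℝ) (n + 1) := ⟨hxn.1.trans hz.1.le, by linarith [hz.2, hδ_def]⟩
  have hzx : 0 ≤ z - x := by linarith [hz.1]
  rw [hg n hn (Ico_subset_Icc_self hxn), hg n hn hzn]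
  calc δ ^ (n * (n + 1) - 1) * (z - x) ≤ (n + 1 - z) ^ (n * (n + 1) - 1) * (z - x) := by
        gcongr; linarith [hz.2, hδ_def]
    _ ≤ _ := blockProfile.le_sub hn hz.1.le hzn.2

theorem slopeIci1_le (hg : EqOnBlockProfiles g) {n : ℕ} (hn : 1 ≤ n) {y : ℝ}
    (hy : y ∈ Ioo (n : ℝ) (n + 1)) :
    slopeIci1 g y ≤ ENNReal.ofReal ((n + 1 - y) ^ (n * (n + 1) - 1)) := by
  have hB : 0 ≤ ((n : ℝ) + 1 - y) ^ (n * (n + 1) - 1) := pow_nonneg (by linarith [hy.2]) _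
  refine slopeIci1_le_ofReal hB (isOpen_Ioo.mem_nhds hy) fun z hz => ?_
  rw [hg n hn (Ioo_subset_Icc_self hy), hg n hn (Ioo_subset_Icc_self hz)]
  rcases le_total z y with hzy | hyz
  · have hdecr := blockProfile.le_sub hn hzy hy.2.le
    linarith [mul_nonneg hB (sub_nonneg.2 hzy), mul_nonneg hB (abs_nonneg (y - z))]
  · rw [abs_sub_comm, abs_of_nonneg (sub_nonneg.2 hyz)]
    exact blockProfile.sub_le hn hyz hz.2.le

theorem liminf_slopeIci1_eq_zero (hg : EqOnBlockProfiles g) {n : ℕ} (hn : 2 ≤ n) :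
    liminf (fun y => slopeIci1 g y) (𝓝[Ici 1 \ {(n : ℝ)}] n) = 0 := by
  obtain ⟨k, rfl⟩ : ∃ k, n = k + 1 := ⟨n - 1, by omega⟩
  have hk : 1 ≤ k := by omega
  have hk' : (1 : ℝ) ≤ k := by exact_mod_cast hk
  push_cast
  set F := 𝓝[Ioo (k : ℝ) (k + 1)] ((k : ℝ) + 1)
  have hF : F.NeBot := right_nhdsWithin_Ioo_neBot (by linarith)
  have hexp : k * (k + 1) - 1 ≠ 0 := by
    have := Nat.mul_le_mul hk (by omega : 2 ≤ k + 1)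
    omega
  have hbound :
      Tendsto (fun y => ENNReal.ofReal (((k : ℝ) + 1 - y) ^ (k * (k + 1) - 1))) F (𝓝 0) := by
    have hcont : Continuous fun y => ENNReal.ofReal (((k : ℝ) + 1 - y) ^ (k * (k + 1) - 1)) :=
      ENNReal.continuous_ofReal.comp (by fun_prop)
    exact (hcont.tendsto' _ _ (by simp [hexp])).mono_left nhdsWithin_le_nhds
  have hsub : Ioo (k : ℝ) (k + 1) ⊆ Ici 1 \ {(k : ℝ) + 1} :=
    fun y hy => ⟨mem_Ici.2 (by linarith [hy.1]), ne_of_lt hy.2⟩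
  refine le_antisymm ?_ zero_le
  calc liminf (fun y => slopeIci1 g y) (𝓝[Ici 1 \ {(k : ℝ) + 1}] ((k : ℝ) + 1))
      ≤ liminf (fun y => slopeIci1 g y) F :=
        liminf_le_liminf_of_le (nhdsWithin_mono _ hsub)
    _ ≤ liminf (fun y => ENNReal.ofReal (((k : ℝ) + 1 - y) ^ (k * (k + 1) - 1))) F :=
        liminf_le_liminf (eventually_nhdsWithin_of_forall fun y hy => hg.slopeIci1_le hk hy)
    _ = 0 := hbound.liminf_eq

end EqOnBlockProfiles

/-- The block-defined function
`g(x) = 1/(n+1) + (x−(n+1))^{n(n+1)}/(n(n+1))` on `[n, n+1)` is continuous on `[1,∞)`,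
has infimum `0` which is never attained, has strictly positive local slope everywhere,
while the slope has liminf `0` at each integer `n ≥ 2`. -/
theorem stmt18 (g : ℝ → ℝ)
    (hg : ∀ n : ℕ, 1 ≤ n → ∀ x ∈ Set.Ico (n : ℝ) ((n : ℝ) + 1),
      g x = 1 / ((n : ℝ) + 1) +
        (x - ((n : ℝ) + 1)) ^ (n * (n + 1)) / ((n : ℝ) * ((n : ℝ) + 1))) :
    ContinuousOn g (Set.Ici (1 : ℝ)) ∧
    IsGLB (g '' Set.Ici (1 : ℝ)) 0 ∧
    (∀ x ∈ Set.Ici (1 : ℝ), g x ≠ 0) ∧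
    (∀ x ∈ Set.Ici (1 : ℝ), 0 < slopeIci1 g x) ∧
    (∀ n : ℕ, 2 ≤ n →
      liminf (fun y => slopeIci1 g y) (𝓝[Set.Ici 1 \ {(n : ℝ)}] (n : ℝ)) = 0) := by
  have hblock : EqOnBlockProfiles g := eqOnBlockProfiles_of_eqOn_Ico fun n hn x hx =>
    (hg n hn x hx).trans (blockProfile.eq_sub_pow n x).symm
  exact ⟨hblock.continuousOn, hblock.isGLB_image_Ici_one, fun x hx => (hblock.pos hx).ne',
    fun x hx => hblock.slopeIci1_pos hx, fun n hn => hblock.liminf_slopeIci1_eq_zero hn⟩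
end
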